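/- Conditional excess-distortion identity: R_X^c(d,ε) = R_X^{c,+}(d,ε), where R_X^c(d,ε) = inf over kernels P_{Y|X} with P(d(X,Y) > d | X=x) ≤ ε for all x in the support of P_X of I(X;Y), and R_X^{c,+}(d,ε) = inf over distributions Q on Y of E[ d(α_Q(X) ‖ Q(B_d(X))) ] with α_Q(x) = max{1-ε, Q(B_d(x))}. -/

import Mathlib

/-!
The two infima are compared value by value. For a feasible kernel `K`, take `Q = P_Y`:
data processing for the partition `{B_D(x), B_D(x)ᶜ}` gives
`D(K(x) ‖ P_Y) ≥ d(K(x)(B_D(x)) ‖ P_Y(B_D(x)))`, and `d(· ‖ q)`, being convex with minimum `0`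
at `q`, is nondecreasing on `[q, 1]`, so this is at least `d(α_Q(x) ‖ Q(B_D(x)))`.
Conversely, for a given `Q`, rescaling `Q` on `B_D(x)` to mass `α_Q(x)` and on the complement
to mass `1 - α_Q(x)` gives a feasible kernel with `D(K(x) ‖ Q) = d(α_Q(x) ‖ Q(B_D(x)))`,
and `I(X;Y) ≤ E[D(K(X) ‖ Q)]` by the golden formula.
-/

noncomputable section

/-- `q` is a probability mass function on the finite alphabet `α`. -/
def isPMF {α : Type*} [Fintype α] (q : α → ℝ) : Prop :=
  (∀ a, 0 ≤ q a) ∧ ∑ a, q a = 1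

/-- Shannon entropy (in bits) of a pmf on a finite alphabet. -/
def ent {α : Type*} [Fintype α] (q : α → ℝ) : ℝ :=
  ∑ a, -(q a * Real.logb 2 (q a))

/-- Relative entropy (Kullback–Leibler divergence, in bits) between pmfs. -/
def klDiv {α : Type*} [Fintype α] (μ ν : α → ℝ) : ℝ :=
  ∑ a, μ a * Real.logb 2 (μ a / ν a)

/-- Probability, under `Q`, of the distortion-`D` ball around `x`:
`Q(B_D(x)) = Q {y : df x y ≤ D}`. -/
def probBall {X Y : Type*} [Fintype Y] (Q : Y → ℝ) (df : X → Y → ℝ) (D : ℝ) (x : X) : ℝ :=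
  ∑ y, if df x y ≤ D then Q y else 0

/-- Output marginal `P_Y` induced by input pmf `p` and kernel `K`. -/
def marg {X Y : Type*} [Fintype X] [Fintype Y] (p : X → ℝ) (K : X → Y → ℝ) : Y → ℝ :=
  fun y => ∑ x, p x * K x y

/-- Mutual information (in bits) `I(X;Y)` of the joint law `p ⊗ K`,
written as `E_X [ D(K(X) ‖ P_Y) ]`. -/
def mutInfo {X Y : Type*} [Fintype X] [Fintype Y] (p : X → ℝ) (K : X → Y → ℝ) : ℝ :=
  ∑ x, p x * klDiv (K x) (marg p K)

/-- Binary relative entropy `d(α‖q)` (in bits). -/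
def bdiv (a q : ℝ) : ℝ :=
  a * Real.logb 2 (a / q) + (1 - a) * Real.logb 2 ((1 - a) / (1 - q))

open Finset Real

lemma sub_le_mul_log_div {a c : ℝ} (ha : 0 ≤ a) (hc : 0 ≤ c) (hca : c = 0 → a = 0) :
    a - c ≤ a * log (a / c) := by
  rcases ha.eq_or_lt with rfl | ha
  · simpa using hc
  have hc : 0 < c := hc.lt_of_ne (Ne.symm (mt hca ha.ne'))
  have h := mul_le_mul_of_nonneg_left (one_sub_inv_le_log_of_pos (div_pos ha hc)) ha.le
  rwa [inv_div, mul_sub, mul_one, mul_div_cancel₀ _ ha.ne'] at h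

/-- Log-sum inequality, with the conventions `log 0 = 0` and `x / 0 = 0`. -/
theorem sum_mul_log_sum_div_le {ι : Type*} (s : Finset ι) {a b : ι → ℝ}
    (ha : ∀ i ∈ s, 0 ≤ a i) (hb : ∀ i ∈ s, 0 ≤ b i) (hab : ∀ i ∈ s, b i = 0 → a i = 0) :
    (∑ i ∈ s, a i) * log ((∑ i ∈ s, a i) / ∑ i ∈ s, b i) ≤ ∑ i ∈ s, a i * log (a i / b i) := by
  set A := ∑ i ∈ s, a i
  set B := ∑ i ∈ s, b i
  set t := A / B
  have hA : A = 0 → ∀ i ∈ s, a i = 0 := fun h => (sum_eq_zero_iff_of_nonneg ha).1 h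
  have hBA : B = 0 → A = 0 := fun h =>
    sum_eq_zero fun i hi => hab i hi ((sum_eq_zero_iff_of_nonneg hb).1 h i hi)
  -- Termwise `a - b t ≤ a log (a / (b t))` with `t = A / B`; the left sides sum to zero.
  have key : ∀ i ∈ s, a i - b i * t ≤ a i * log (a i / b i) - a i * log t := by
    intro i hi
    have hbt : b i * t = 0 → a i = 0 := by
      intro h
      rcases mul_eq_zero.1 h with h | h
      · exact hab i hi h
      · rcases div_eq_zero_iff.1 h with h | h
        exacts [hA h i hi, hA (hBA h) i hi]
    calc a i - b i * t ≤ a i * log (a i / (b i * t)) :=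
          sub_le_mul_log_div (ha i hi) (mul_nonneg (hb i hi) (div_nonneg
            (sum_nonneg ha) (sum_nonneg hb))) hbt
      _ = a i * log (a i / b i) - a i * log t := by
          rcases eq_or_ne (a i) 0 with h | h
          · simp [h]
          obtain ⟨hb0, ht0⟩ := mul_ne_zero_iff.1 (mt hbt h)
          rw [log_div h (mul_ne_zero hb0 ht0), log_mul hb0 ht0, log_div h hb0]
          ring
  have hsum := sum_le_sum key
  rw [sum_sub_distrib, sum_sub_distrib, ← sum_mul, ← sum_mul, mul_comm B,
    div_mul_cancel_of_imp hBA, sub_self] at hsum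
  linarith

theorem sum_mul_logb_sum_div_le {ι : Type*} (s : Finset ι) {a b : ι → ℝ}
    (ha : ∀ i ∈ s, 0 ≤ a i) (hb : ∀ i ∈ s, 0 ≤ b i) (hab : ∀ i ∈ s, b i = 0 → a i = 0) :
    (∑ i ∈ s, a i) * logb 2 ((∑ i ∈ s, a i) / ∑ i ∈ s, b i) ≤
      ∑ i ∈ s, a i * logb 2 (a i / b i) := by
  simp only [logb, ← mul_div_assoc, ← sum_div]
  gcongr
  exact sum_mul_log_sum_div_le s ha hb hab

namespace isPMF

variable {α : Type*} [Fintype α] {q : α → ℝ}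

lemma sum_le_one (hq : isPMF q) (s : Finset α) : ∑ a ∈ s, q a ≤ 1 :=
  hq.2 ▸ sum_le_univ_sum_of_nonneg hq.1

lemma sum_compl [DecidableEq α] (hq : isPMF q) (s : Finset α) :
    ∑ a ∈ sᶜ, q a = 1 - ∑ a ∈ s, q a := by
  rw [← hq.2, ← sum_add_sum_compl s q, add_sub_cancel_left]

end isPMF

section Divergence

variable {α : Type*} [Fintype α] {μ ν : α → ℝ}

theorem klDiv_nonneg (hμ : isPMF μ) (hν : isPMF ν) (hμν : ∀ a, ν a = 0 → μ a = 0) :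
    0 ≤ klDiv μ ν := by
  have h := sum_mul_logb_sum_div_le univ (fun a _ => hμ.1 a) (fun a _ => hν.1 a)
    (fun a _ => hμν a)
  rwa [hμ.2, hν.2, div_one, logb_one, mul_zero] at h

/-- Data processing for the partition `{s, sᶜ}`. -/
theorem bdiv_sum_le_klDiv [DecidableEq α] (hμ : isPMF μ) (hν : isPMF ν)
    (hμν : ∀ a, ν a = 0 → μ a = 0) (s : Finset α) :
    bdiv (∑ a ∈ s, μ a) (∑ a ∈ s, ν a) ≤ klDiv μ ν := by
  have hs := sum_mul_logb_sum_div_le s (fun a _ => hμ.1 a) (fun a _ => hν.1 a)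
    (fun a _ => hμν a)
  have hsc := sum_mul_logb_sum_div_le sᶜ (fun a _ => hμ.1 a) (fun a _ => hν.1 a)
    (fun a _ => hμν a)
  rw [hμ.sum_compl, hν.sum_compl] at hsc
  rw [bdiv, klDiv, ← sum_add_sum_compl s]
  exact add_le_add hs hsc

end Divergence

lemma klDiv_bernoulli (a q : ℝ) :
    klDiv (fun b : Bool => if b then a else 1 - a) (fun b => if b then q else 1 - q) =
      bdiv a q := by
  simp [klDiv, bdiv]

lemma bdiv_nonneg {a q : ℝ} (ha₀ : 0 ≤ a) (ha₁ : a ≤ 1) (hq₀ : 0 < q) (hq₁ : q < 1) :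
    0 ≤ bdiv a q := by
  rw [← klDiv_bernoulli]
  refine klDiv_nonneg ⟨fun b => ?_, by simp⟩ ⟨fun b => ?_, by simp⟩ fun b hb => ?_ <;>
    cases b <;> simp only [Bool.false_eq_true, ↓reduceIte] at * <;> linarith

lemma bdiv_self (q : ℝ) : bdiv q q = 0 := by
  rcases eq_or_ne q 0 with h | h <;> rcases eq_or_ne (1 - q) 0 with h' | h' <;> simp [bdiv, h, h']

lemma mul_log_div_eq {a q : ℝ} (hq : q ≠ 0) : a * log (a / q) = a * log a - a * log q := by
  rcases eq_or_ne a 0 with rfl | ha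
  · simp
  · rw [log_div ha hq, mul_sub]

lemma bdiv_eq_neg_binEntropy {q : ℝ} (hq₀ : q ≠ 0) (hq₁ : q ≠ 1) (a : ℝ) :
    bdiv a q = (-binEntropy a - a * log q - (1 - a) * log (1 - q)) / log 2 := by
  simp only [bdiv, binEntropy, logb, ← mul_div_assoc, ← add_div, log_inv,
    mul_log_div_eq hq₀, mul_log_div_eq (sub_ne_zero.2 hq₁.symm)]
  ring

theorem convexOn_bdiv {q : ℝ} (hq₀ : q ≠ 0) (hq₁ : q ≠ 1) :
    ConvexOn ℝ (Set.Icc 0 1) (bdiv · q) := by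
  refine ⟨convex_Icc 0 1, fun x hx y hy a b ha hb hab => ?_⟩
  have h := strictConcave_binEntropy.concaveOn.2 hx hy ha hb hab
  simp only [smul_eq_mul] at h ⊢
  rw [bdiv_eq_neg_binEntropy hq₀ hq₁, bdiv_eq_neg_binEntropy hq₀ hq₁,
    bdiv_eq_neg_binEntropy hq₀ hq₁, mul_div_assoc', mul_div_assoc', ← add_div]
  gcongr ?_ / _
  linear_combination h + log (1 - q) * hab

theorem bdiv_monotoneOn {q : ℝ} (hq₀ : 0 < q) (hq₁ : q < 1) :
    MonotoneOn (bdiv · q) (Set.Icc q 1) := by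
  intro b hb a ha hba
  have hq : q ∈ Set.Icc (0 : ℝ) 1 := ⟨hq₀.le, hq₁.le⟩
  have h₀ : ∀ c ∈ Set.Icc q 1, 0 ≤ bdiv c q := fun c hc =>
    bdiv_nonneg (hq₀.le.trans hc.1) hc.2 hq₀ hq₁
  rcases hb.1.eq_or_lt with rfl | hqb
  · simpa only [bdiv_self] using h₀ a ha
  · refine (convexOn_bdiv hq₀.ne' hq₁.ne).le_right_of_left_le'' hq
      ⟨hq₀.le.trans ha.1, ha.2⟩ hqb hba ?_
    simpa only [bdiv_self] using h₀ b hb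

theorem bdiv_max_le_klDiv {α : Type*} [Fintype α] [DecidableEq α] {μ ν : α → ℝ}
    (hμ : isPMF μ) (hν : isPMF ν) (hμν : ∀ a, ν a = 0 → μ a = 0) {s : Finset α} {c : ℝ}
    (hs : 0 < ∑ a ∈ s, ν a) (hc : c ≤ ∑ a ∈ s, μ a) :
    bdiv (max c (∑ a ∈ s, ν a)) (∑ a ∈ s, ν a) ≤ klDiv μ ν := by
  rcases le_or_gt c (∑ a ∈ s, ν a) with hcν | hνc
  · rw [max_eq_right hcν, bdiv_self]
    exact klDiv_nonneg hμ hν hμν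
  · rw [max_eq_left hνc.le]
    have hμ₁ := hμ.sum_le_one s
    calc bdiv c (∑ a ∈ s, ν a) ≤ bdiv (∑ a ∈ s, μ a) (∑ a ∈ s, ν a) :=
          bdiv_monotoneOn hs (by linarith) ⟨hνc.le, hc.trans hμ₁⟩
            ⟨hνc.le.trans hc, hμ₁⟩ hc
      _ ≤ klDiv μ ν := bdiv_sum_le_klDiv hμ hν hμν s

lemma sum_mul_logb_mul_div {α : Type*} (t : Finset α) (Q : α → ℝ) (c : ℝ) :
    ∑ y ∈ t, c * Q y * logb 2 (c * Q y / Q y) = c * (∑ y ∈ t, Q y) * logb 2 c := by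
  rw [mul_sum, sum_mul]
  refine sum_congr rfl fun y _ => ?_
  rcases eq_or_ne (Q y) 0 with h | h
  · simp [h]
  · rw [mul_div_cancel_right₀ _ h]

section Tilt

variable {α : Type*} [DecidableEq α] {Q : α → ℝ} {s : Finset α} {a : ℝ}

/-- `Q` conditioned on `s` and on its complement, recombined with weights `a` and `1 - a`. -/
def tilt (Q : α → ℝ) (s : Finset α) (a : ℝ) (y : α) : ℝ :=
  (if y ∈ s then a / ∑ z ∈ s, Q z else (1 - a) / (1 - ∑ z ∈ s, Q z)) * Q y

lemma tilt_of_mem {y : α} (hy : y ∈ s) : tilt Q s a y = a / (∑ z ∈ s, Q z) * Q y := by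
  rw [tilt, if_pos hy]

lemma tilt_eq_zero {y : α} (hy : Q y = 0) : tilt Q s a y = 0 := by
  rw [tilt, hy, mul_zero]

lemma sum_tilt (hs : ∑ y ∈ s, Q y ≠ 0) : ∑ y ∈ s, tilt Q s a y = a := by
  rw [sum_congr rfl fun y hy => tilt_of_mem hy, ← mul_sum, div_mul_cancel₀ _ hs]

variable [Fintype α]

lemma tilt_of_mem_compl {y : α} (hy : y ∈ sᶜ) :
    tilt Q s a y = (1 - a) / (1 - ∑ z ∈ s, Q z) * Q y := by
  rw [tilt, if_neg (mem_compl.1 hy)]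

lemma div_mul_sum_compl (hQ : isPMF Q) (hsa : ∑ y ∈ s, Q y = 1 → a = 1) :
    (1 - a) / (1 - ∑ y ∈ s, Q y) * ∑ y ∈ sᶜ, Q y = 1 - a := by
  rw [hQ.sum_compl]
  exact div_mul_cancel_of_imp fun h => by rw [hsa (by linarith), sub_self]

lemma sum_compl_tilt (hQ : isPMF Q) (hsa : ∑ y ∈ s, Q y = 1 → a = 1) :
    ∑ y ∈ sᶜ, tilt Q s a y = 1 - a := by
  rw [sum_congr rfl fun y hy => tilt_of_mem_compl hy, ← mul_sum, div_mul_sum_compl hQ hsa]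

lemma isPMF_tilt (hQ : isPMF Q) (hs : 0 < ∑ y ∈ s, Q y) (hsa : ∑ y ∈ s, Q y ≤ a)
    (ha : a ≤ 1) : isPMF (tilt Q s a) := by
  have hs₁ := hQ.sum_le_one s
  refine ⟨fun y => mul_nonneg ?_ (hQ.1 y), ?_⟩
  · split_ifs
    · exact div_nonneg (hs.le.trans hsa) hs.le
    · exact div_nonneg (by linarith) (by linarith)
  · rw [← sum_add_sum_compl s, sum_tilt hs.ne', sum_compl_tilt hQ fun h => by linarith,
      add_sub_cancel]

lemma klDiv_tilt (hQ : isPMF Q) (hs : ∑ y ∈ s, Q y ≠ 0) (hsa : ∑ y ∈ s, Q y = 1 → a = 1) :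
    klDiv (tilt Q s a) Q = bdiv a (∑ y ∈ s, Q y) := by
  set q := ∑ y ∈ s, Q y
  have h₁ : ∑ y ∈ s, tilt Q s a y * logb 2 (tilt Q s a y / Q y) = a * logb 2 (a / q) :=
    calc _ = ∑ y ∈ s, a / q * Q y * logb 2 (a / q * Q y / Q y) :=
          sum_congr rfl fun y hy => by rw [tilt_of_mem hy]
      _ = _ := by rw [sum_mul_logb_mul_div, div_mul_cancel₀ _ hs]
  have h₂ : ∑ y ∈ sᶜ, tilt Q s a y * logb 2 (tilt Q s a y / Q y) =
      (1 - a) * logb 2 ((1 - a) / (1 - q)) :=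
    calc _ = ∑ y ∈ sᶜ, (1 - a) / (1 - q) * Q y * logb 2 ((1 - a) / (1 - q) * Q y / Q y) :=
          sum_congr rfl fun y hy => by rw [tilt_of_mem_compl hy]
      _ = _ := by rw [sum_mul_logb_mul_div, div_mul_sum_compl hQ hsa]
  rw [klDiv, ← sum_add_sum_compl s, h₁, h₂, bdiv]

end Tilt

section Channel

variable {X Y : Type*} [Fintype X] [Fintype Y] {p : X → ℝ} {K : X → Y → ℝ}

lemma mul_le_marg (hp : ∀ x, 0 ≤ p x) (hK : ∀ x y, 0 ≤ K x y) (x : X) (y : Y) :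
    p x * K x y ≤ marg p K y :=
  single_le_sum (f := fun x => p x * K x y) (fun x _ => mul_nonneg (hp x) (hK x y)) (mem_univ x)

lemma isPMF_marg (hp : isPMF p) (hK : ∀ x, isPMF (K x)) : isPMF (marg p K) := by
  refine ⟨fun y => sum_nonneg fun x _ => mul_nonneg (hp.1 x) ((hK x).1 y), ?_⟩
  simp only [marg]
  rw [sum_comm]
  simp only [← mul_sum, (hK _).2, mul_one, hp.2]

lemma eq_zero_of_marg_eq_zero (hp : ∀ x, 0 ≤ p x) (hK : ∀ x y, 0 ≤ K x y) {x : X}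
    (hx : 0 < p x) {y : Y} (hy : marg p K y = 0) : K x y = 0 :=
  (mul_eq_zero.1 (le_antisymm (hy ▸ mul_le_marg hp hK x y)
    (mul_nonneg (hp x) (hK x y)))).resolve_left hx.ne'

/-- The golden formula of information theory. -/
theorem sum_klDiv_eq_mutInfo_add_klDiv (hp : ∀ x, 0 ≤ p x) (hK : ∀ x y, 0 ≤ K x y)
    {Q : Y → ℝ} (hKQ : ∀ x, 0 < p x → ∀ y, Q y = 0 → K x y = 0) :
    ∑ x, p x * klDiv (K x) Q = mutInfo p K + klDiv (marg p K) Q := by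
  have key : ∀ x y, p x * K x y * logb 2 (K x y / Q y) =
      p x * K x y * logb 2 (K x y / marg p K y) +
        p x * K x y * logb 2 (marg p K y / Q y) := by
    intro x y
    rcases eq_or_ne (p x * K x y) 0 with h | h
    · simp [h]
    have hpK : 0 < p x * K x y := (mul_nonneg (hp x) (hK x y)).lt_of_ne' h
    have hx : 0 < p x := (hp x).lt_of_ne' (left_ne_zero_of_mul h)
    have hK₀ : K x y ≠ 0 := right_ne_zero_of_mul h
    have hQ₀ : Q y ≠ 0 := fun hQ => hK₀ (hKQ x hx y hQ)
    have hM₀ : marg p K y ≠ 0 := (hpK.trans_le (mul_le_marg hp hK x y)).ne'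
    rw [← mul_add, ← logb_mul (div_ne_zero hK₀ hM₀) (div_ne_zero hM₀ hQ₀),
      div_mul_div_cancel₀ hM₀]
  simp only [mutInfo, klDiv, mul_sum, ← mul_assoc, key, sum_add_distrib]
  rw [sum_comm (f := fun x y => p x * K x y * logb 2 (marg p K y / Q y))]
  simp only [← sum_mul, marg]

theorem mutInfo_le_sum_klDiv (hp : isPMF p) (hK : ∀ x, isPMF (K x)) {Q : Y → ℝ}
    (hQ : isPMF Q) (hKQ : ∀ x, 0 < p x → ∀ y, Q y = 0 → K x y = 0) :
    mutInfo p K ≤ ∑ x, p x * klDiv (K x) Q := by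
  rw [sum_klDiv_eq_mutInfo_add_klDiv hp.1 (fun x => (hK x).1) hKQ]
  refine le_add_of_nonneg_right (klDiv_nonneg (isPMF_marg hp hK) hQ fun y hy => ?_)
  refine sum_eq_zero fun x _ => ?_
  rcases (hp.1 x).eq_or_lt with h | h
  · rw [← h, zero_mul]
  · rw [hKQ x h y hy, mul_zero]

end Channel

lemma probBall_eq_sum_filter {X Y : Type*} [Fintype Y] (Q : Y → ℝ) (df : X → Y → ℝ) (D : ℝ)
    (x : X) : probBall Q df D x = ∑ y with df x y ≤ D, Q y :=
  (sum_filter _ _).symm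

section Distortion

variable {X Y : Type*} [Fintype X] [Fintype Y] {p : X → ℝ} {K : X → Y → ℝ}
  {df : X → Y → ℝ} {D c : ℝ}

lemma mul_probBall_le_probBall_marg (hp : ∀ x, 0 ≤ p x) (hK : ∀ x y, 0 ≤ K x y)
    (x x' : X) : p x * probBall (K x) df D x' ≤ probBall (marg p K) df D x' := by
  simp only [probBall_eq_sum_filter, mul_sum]
  exact sum_le_sum fun y _ => mul_le_marg hp hK x y

lemma probBall_marg_pos (hp : isPMF p) (hK : ∀ x, isPMF (K x)) (hc : 0 < c)
    (hKc : ∀ x, 0 < p x → c ≤ probBall (K x) df D x) {x : X} (hx : 0 < p x) :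
    0 < probBall (marg p K) df D x :=
  (mul_pos hx (hc.trans_le (hKc x hx))).trans_le
    (mul_probBall_le_probBall_marg hp.1 (fun x => (hK x).1) x x)

theorem sum_bdiv_max_le_mutInfo [DecidableEq Y] (hp : isPMF p) (hK : ∀ x, isPMF (K x))
    (hc : 0 < c) (hKc : ∀ x, 0 < p x → c ≤ probBall (K x) df D x) :
    ∑ x, p x * bdiv (max c (probBall (marg p K) df D x)) (probBall (marg p K) df D x) ≤
      mutInfo p K := by
  refine sum_le_sum fun x _ => ?_
  rcases (hp.1 x).eq_or_lt with h | hx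
  · simp [← h]
  refine mul_le_mul_of_nonneg_left ?_ hx.le
  have hpos := probBall_marg_pos hp hK hc hKc hx
  have hKcx := hKc x hx
  rw [probBall_eq_sum_filter] at hpos hKcx ⊢
  exact bdiv_max_le_klDiv (hK x) (isPMF_marg hp hK)
    (fun y => eq_zero_of_marg_eq_zero hp.1 (fun x => (hK x).1) hx) hpos hKcx

/-- The witness tilts `Q` on each distortion ball. -/
theorem exists_kernel_mutInfo_le_sum_bdiv_max [DecidableEq Y] (hp : isPMF p) {Q : Y → ℝ}
    (hQ : isPMF Q) (hc : c ≤ 1) (hQpos : ∀ x, 0 < p x → 0 < probBall Q df D x) :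
    ∃ K : X → Y → ℝ, (∀ x, isPMF (K x)) ∧ (∀ x, 0 < p x → c ≤ probBall (K x) df D x) ∧
      mutInfo p K ≤ ∑ x, p x * bdiv (max c (probBall Q df D x)) (probBall Q df D x) := by
  simp only [probBall_eq_sum_filter] at hQpos ⊢
  let K : X → Y → ℝ := fun x =>
    if 0 < p x then tilt Q {y | df x y ≤ D} (max c (∑ y with df x y ≤ D, Q y)) else Q
  have hK : ∀ x, isPMF (K x) := by
    intro x
    by_cases hx : 0 < p x
    · simp only [K, if_pos hx]
      exact isPMF_tilt hQ (hQpos x hx) (le_max_right _ _) (max_le hc (hQ.sum_le_one _))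
    · simp only [K, if_neg hx]
      exact hQ
  refine ⟨K, hK, fun x hx => ?_, ?_⟩
  · simp only [K, if_pos hx, sum_tilt (hQpos x hx).ne']
    exact le_max_left _ _
  calc mutInfo p K ≤ ∑ x, p x * klDiv (K x) Q :=
        mutInfo_le_sum_klDiv hp hK hQ fun x hx y hy => by
          simp only [K, if_pos hx]
          exact tilt_eq_zero hy
    _ = _ := by
        refine sum_congr rfl fun x _ => ?_
        rcases (hp.1 x).eq_or_lt with h | hx
        · simp [← h]
        simp only [K, if_pos hx]
        rw [klDiv_tilt hQ (hQpos x hx).ne' fun h => by rw [h, max_eq_right hc]]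

end Distortion

theorem cond_excess_mutual_info_identity_general {X Y : Type*} [Fintype X] [Fintype Y]
    (p : X → ℝ) (df : X → Y → ℝ) (D ε : ℝ) (hε0 : 0 < ε) (hε1 : ε < 1)
    (hp : isPMF p) :
    sInf {r : ℝ | ∃ K : X → Y → ℝ, (∀ x, isPMF (K x)) ∧
        (∀ x, 0 < p x → 1 - ε ≤ probBall (K x) df D x) ∧ r = mutInfo p K} =
    sInf {r : ℝ | ∃ Q : Y → ℝ, isPMF Q ∧ (∀ x, 0 < p x → 0 < probBall Q df D x) ∧
        r = ∑ x, p x *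
          bdiv (max (1 - ε) (probBall Q df D x)) (probBall Q df D x)} := by
  classical
  refine csInf_eq_csInf_of_forall_exists_le ?_ ?_
  · rintro _ ⟨K, hK, hKε, rfl⟩
    have hc : 0 < 1 - ε := sub_pos.2 hε1
    exact ⟨_, ⟨marg p K, isPMF_marg hp hK, fun x => probBall_marg_pos hp hK hc hKε, rfl⟩,
      sum_bdiv_max_le_mutInfo hp hK hc hKε⟩
  · rintro _ ⟨Q, hQ, hQpos, rfl⟩
    obtain ⟨K, hK, hKε, hle⟩ :=
      exists_kernel_mutInfo_le_sum_bdiv_max hp hQ (sub_le_self 1 hε0.le) hQpos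
    exact ⟨_, ⟨K, hK, hKε, rfl⟩, hle⟩

/-- conditional excess-distortion identity `R_X^c(d,ε) = R_X^{c,+}(d,ε)`:
the infimum of `I(X;Y)` over kernels with `P(d(X,Y) > D | X = x) ≤ ε` on the support
of `p` equals the infimum over output pmfs `Q` of
`E[ d(α_Q(X) ‖ Q(B_D(X))) ]` with `α_Q(x) = max (1-ε) (Q(B_D(x)))`. -/
theorem cond_excess_mutual_info_identity {X Y : Type*} [Fintype X] [Fintype Y] [Nonempty Y]
    (p : X → ℝ) (df : X → Y → ℝ) (D ε : ℝ) (hε0 : 0 < ε) (hε1 : ε < 1)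
    (hp : isPMF p) (hball : ∀ x, 0 < p x → ∃ y, df x y ≤ D) :
    sInf {r : ℝ | ∃ K : X → Y → ℝ, (∀ x, isPMF (K x)) ∧
        (∀ x, 0 < p x → 1 - ε ≤ probBall (K x) df D x) ∧ r = mutInfo p K} =
    sInf {r : ℝ | ∃ Q : Y → ℝ, isPMF Q ∧ (∀ x, 0 < p x → 0 < probBall Q df D x) ∧
        r = ∑ x, p x *
          bdiv (max (1 - ε) (probBall Q df D x)) (probBall Q df D x)} :=
  cond_excess_mutual_info_identity_general p df D ε hε0 hε1 hp
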